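/- Let p be a prime with p ≡ 3 (mod 4) and let i ∈ ℂ satisfy i² = −1. Then the rising factorial identity holds: (−ip/4)_{(p+1)/4} · ((3−(i+1)p)/4)_{(p+1)/4} = −(p²/16) · ∏_{j=1}^{(p−3)/4} (−p²/16 − j²), as elements of ℚ(i) (in fact both sides lie in ℚ). -/
import Mathlib



lemma asc_eval_prod (n : ℕ) (x : ℂ) :
    (ascPochhammer ℂ n).eval x = ∏ k ∈ Finset.range n, (x + k) := by
  induction n with
  | zero => simp
  | succ n ih => rw [ascPochhammer_succ_eval, ih, Finset.prod_range_succ]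

theorem pochhammer_prod_identity_one (p : ℕ) (hp : p.Prime) (hp4 : p % 4 = 3)
    (i : ℂ) (hi : i ^ 2 = -1) :
    (ascPochhammer ℂ ((p + 1) / 4)).eval (-i * p / 4) *
      (ascPochhammer ℂ ((p + 1) / 4)).eval ((3 - (i + 1) * p) / 4) =
    -((p : ℂ) ^ 2 / 16) * ∏ j ∈ Finset.Icc 1 ((p - 3) / 4), (-(p : ℂ) ^ 2 / 16 - (j : ℂ) ^ 2) := by
  obtain ⟨m, rfl⟩ : ∃ m, p = 4 * m + 3 := ⟨p / 4, by omega⟩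
  clear hp hp4
  have h1 : (4 * m + 3 + 1) / 4 = m + 1 := by omega
  have h2 : (4 * m + 3 - 3) / 4 = m := by omega
  rw [h1, h2, asc_eval_prod, asc_eval_prod]
  have hrefl : ∏ j ∈ Finset.range (m + 1), ((3 - (i + 1) * ((4 * m + 3 : ℕ) : ℂ)) / 4 + j)
      = ∏ j ∈ Finset.range (m + 1), (-i * ((4 * m + 3 : ℕ) : ℂ) / 4 - j) := by
    rw [← Finset.prod_range_reflect]
    apply Finset.prod_congr rfl
    intro j hj
    simp only [Finset.mem_range, Nat.lt_succ_iff] at hj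
    have : (m + 1 - 1 - j : ℕ) = m - j := by omega
    rw [this, Nat.cast_sub hj]
    push_cast
    ring
  rw [hrefl, ← Finset.prod_mul_distrib]
  have hterm : ∀ j ∈ Finset.range (m + 1),
      (-i * ((4 * m + 3 : ℕ) : ℂ) / 4 + j) * (-i * ((4 * m + 3 : ℕ) : ℂ) / 4 - j)
      = -((4 * m + 3 : ℕ) : ℂ) ^ 2 / 16 - (j : ℂ) ^ 2 := by
    intro j _
    push_cast
    linear_combination ((4 * (m : ℂ) + 3) ^ 2 / 16) * hi
  rw [Finset.prod_congr rfl hterm, Finset.prod_range_succ', ← Finset.Ico_add_one_right_eq_Icc,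
    Finset.prod_Ico_eq_prod_range]
  simp only [Nat.add_sub_cancel, Nat.cast_zero]
  rw [mul_comm]
  congr 1
  · ring
  · apply Finset.prod_congr rfl
    intro j _
    rw [add_comm 1 j]
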